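/- arXiv:2403.17767 — 2 statements merged into one kernel-verified Lean document; each statement's English description precedes it below -/
import Mathlib

section
/- Let Z ~ N(0,1) and q > 0. Then E[tanh(q + √q·Z)] = E[tanh²(q + √q·Z)]. -/
open MeasureTheory ProbabilityTheory Real
open scoped NNReal

/-!
The variable `Y = q + √q Z` has law `N(q, q)`, whose density satisfies `φ(-y) = e^{-2y} φ(y)`.
Since `e^{-2y} (1 + tanh y) = 1 - tanh y`, the function `tanh - tanh² = tanh (1 - tanh)` changes
sign under this weighted reflection, so its expectation vanishes.
-/

theorem Real.measurable_tanh : Measurable tanh := by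
  rw [show tanh = fun x => sinh x / cosh x from funext tanh_eq_sinh_div_cosh]
  fun_prop

theorem Real.exp_neg_two_mul_mul_tanh_sub_sq_neg (x : ℝ) :
    exp (-(2 * x)) * (tanh (-x) - tanh (-x) ^ 2) = -(tanh x - tanh x ^ 2) := by
  have hexp : exp (-(2 * x)) = (exp x)⁻¹ ^ 2 := by rw [← exp_neg, ← exp_nat_mul]; ring_nf
  rw [tanh_neg, tanh_eq, hexp, exp_neg]
  field_simp
  ring

namespace ProbabilityTheory

theorem gaussianReal_zero_one_map_affine (m : ℝ) (v : ℝ≥0) :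
    (gaussianReal 0 1).map (fun z => m + √(v : ℝ) * z) = gaussianReal m v := by
  have hcomp : (fun z => m + √(v : ℝ) * z) = (m + ·) ∘ (√(v : ℝ) * ·) := rfl
  rw [hcomp, ← Measure.map_map (measurable_const_add m) (measurable_const_mul _),
    gaussianReal_map_const_mul, gaussianReal_map_const_add, mul_zero, zero_add, mul_one]
  congr
  exact sq_sqrt v.2

theorem integral_gaussianReal_zero_one_comp_affine {E : Type*} [NormedAddCommGroup E]
    [NormedSpace ℝ E] (m : ℝ) (v : ℝ≥0) {f : ℝ → E}
    (hf : AEStronglyMeasurable f (gaussianReal m v)) :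
    ∫ z, f (m + √(v : ℝ) * z) ∂gaussianReal 0 1 = ∫ y, f y ∂gaussianReal m v := by
  rw [← gaussianReal_zero_one_map_affine m v] at hf ⊢
  exact (integral_map (by fun_prop) hf).symm

theorem gaussianPDFReal_neg (m : ℝ) (v : ℝ≥0) (y : ℝ) :
    gaussianPDFReal m v (-y) = exp (-(2 * m * y / v)) * gaussianPDFReal m v y := by
  simp only [gaussianPDFReal_def]
  rw [mul_left_comm, ← exp_add]
  congr 2
  ring

theorem integral_gaussianReal_eq_integral_exp_mul_comp_neg {m : ℝ} {v : ℝ≥0} (hv : v ≠ 0)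
    (f : ℝ → ℝ) :
    ∫ y, f y ∂gaussianReal m v = ∫ y, exp (-(2 * m * y / v)) * f (-y) ∂gaussianReal m v := by
  simp only [integral_gaussianReal_eq_integral_smul hv, smul_eq_mul]
  rw [← integral_neg_eq_self]
  simp only [gaussianPDFReal_neg]
  congr 1
  ext y
  ring

theorem integral_tanh_gaussianReal_eq_integral_tanh_sq {q : ℝ≥0} (hq : q ≠ 0) :
    ∫ y, tanh y ∂gaussianReal q q = ∫ y, tanh y ^ 2 ∂gaussianReal q q := by
  have hbound : ∀ y, ‖tanh y‖ ≤ 1 := fun y => (abs_tanh_lt_one y).le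
  have hint : Integrable tanh (gaussianReal q q) :=
    .of_bound measurable_tanh.aestronglyMeasurable 1 (.of_forall hbound)
  have hint_sq : Integrable (fun y => tanh y ^ 2) (gaussianReal q q) :=
    .of_bound (measurable_tanh.pow_const 2).aestronglyMeasurable 1
      (.of_forall fun y => by rw [norm_pow]; exact pow_le_one₀ (norm_nonneg _) (hbound y))
  have hantisymm : ∫ y, tanh y - tanh y ^ 2 ∂gaussianReal q q
      = -∫ y, tanh y - tanh y ^ 2 ∂gaussianReal q q := by
    have hweight : ∀ y : ℝ, 2 * q * y / q = 2 * y := fun y => by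
      field_simp [show (q : ℝ) ≠ 0 by exact_mod_cast hq]
    calc ∫ y, tanh y - tanh y ^ 2 ∂gaussianReal q q
        = ∫ y, exp (-(2 * q * y / q)) * (tanh (-y) - tanh (-y) ^ 2) ∂gaussianReal q q :=
          integral_gaussianReal_eq_integral_exp_mul_comp_neg hq _
      _ = ∫ y, -(tanh y - tanh y ^ 2) ∂gaussianReal q q := by
          simp only [hweight, exp_neg_two_mul_mul_tanh_sub_sq_neg]
      _ = -∫ y, tanh y - tanh y ^ 2 ∂gaussianReal q q := integral_neg _
  rw [← sub_eq_zero, ← integral_sub hint hint_sq]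
  linarith

end ProbabilityTheory

theorem stmt_8 (q : ℝ) (hq : 0 < q) :
    (∫ z, Real.tanh (q + Real.sqrt q * z) ∂(gaussianReal 0 1))
      = ∫ z, Real.tanh (q + Real.sqrt q * z) ^ 2 ∂(gaussianReal 0 1) := by
  lift q to ℝ≥0 using hq.le
  rw [integral_gaussianReal_zero_one_comp_affine (f := tanh) _ _
      measurable_tanh.aestronglyMeasurable,
    integral_gaussianReal_zero_one_comp_affine (f := fun y => tanh y ^ 2) _ _
      (measurable_tanh.pow_const 2).aestronglyMeasurable]
  exact integral_tanh_gaussianReal_eq_integral_tanh_sq (by exact_mod_cast hq.ne')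
end

section
/- For every ε ∈ (−1,1) and q > 0, define F_ε(q) = E[ψ_ε(q + √q·Z)] with Z ~ N(0,1) and ψ_ε(t) = (tanh(t) + ε²(1 − tanh(t) − tanh²(t)))/(1 − ε²tanh²(t)). Then F_ε(q) ≤ ε² + (1 − ε²)·F(q), where F(q) = E[tanh(q + √q·Z)]. -/
open MeasureTheory ProbabilityTheory

noncomputable def ψ (ε t : ℝ) : ℝ :=
  (Real.tanh t + ε ^ 2 * (1 - Real.tanh t - Real.tanh t ^ 2))
    / (1 - ε ^ 2 * Real.tanh t ^ 2)

lemma Real.measurable_tanh_s19 : Measurable Real.tanh := by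
  have h : Real.tanh = fun x => Real.sinh x / Real.cosh x :=
    funext Real.tanh_eq_sinh_div_cosh
  rw [h]
  exact Real.measurable_sinh.div Real.measurable_cosh

lemma measurable_ψ (ε : ℝ) : Measurable (ψ ε) := by
  unfold ψ
  have := Real.measurable_tanh_s19
  fun_prop

section Pointwise

variable {ε : ℝ} (hε : ε ^ 2 ≤ 1) (t : ℝ)
include hε

lemma one_sub_sq_mul_tanh_sq_pos : 0 < 1 - ε ^ 2 * Real.tanh t ^ 2 := by
  nlinarith [Real.tanh_sq_lt_one t, sq_nonneg ε]

/-- Clearing the denominator, the gap is `ε² tanh² t (1 - ε²) (1 - tanh t) ≥ 0`. -/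
lemma ψ_le : ψ ε t ≤ ε ^ 2 + (1 - ε ^ 2) * Real.tanh t := by
  rw [ψ, div_le_iff₀ (one_sub_sq_mul_tanh_sq_pos hε t)]
  nlinarith [mul_nonneg (mul_nonneg (sq_nonneg (ε * Real.tanh t)) (sub_nonneg.2 hε))
    (sub_nonneg.2 (Real.tanh_lt_one t).le)]

/-- Numerator plus denominator factors as `(1 + tanh t) ((1 - ε²) + 2 ε² (1 - tanh t)) ≥ 0`. -/
lemma neg_one_le_ψ : -1 ≤ ψ ε t := by
  rw [ψ, le_div_iff₀ (one_sub_sq_mul_tanh_sq_pos hε t)]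
  have hu := Real.tanh_lt_one t
  have hfactor : 0 ≤ (1 - ε ^ 2) + 2 * ε ^ 2 * (1 - Real.tanh t) := by
    have := sq_nonneg ε
    nlinarith
  nlinarith [mul_nonneg (sub_nonneg.2 (Real.neg_one_lt_tanh t).le) hfactor]

lemma abs_ψ_le_one : |ψ ε t| ≤ 1 := by
  have hgap : 0 ≤ (1 - ε ^ 2) * (1 - Real.tanh t) :=
    mul_nonneg (sub_nonneg.2 hε) (sub_nonneg.2 (Real.tanh_lt_one t).le)
  rw [abs_le]
  exact ⟨neg_one_le_ψ hε t, by linarith [ψ_le hε t]⟩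

end Pointwise

section Integral

variable {Ω : Type*} [MeasurableSpace Ω] {μ : Measure Ω} {X : Ω → ℝ}

lemma integrable_tanh_comp [IsFiniteMeasure μ] (hX : AEMeasurable X μ) :
    Integrable (fun ω => Real.tanh (X ω)) μ :=
  .of_bound (Real.measurable_tanh_s19.comp_aemeasurable hX).aestronglyMeasurable 1
    (ae_of_all _ fun ω => (Real.abs_tanh_lt_one (X ω)).le)

lemma integrable_ψ_comp [IsFiniteMeasure μ] {ε : ℝ} (hε : ε ^ 2 ≤ 1) (hX : AEMeasurable X μ) :
    Integrable (fun ω => ψ ε (X ω)) μ :=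
  .of_bound ((measurable_ψ ε).comp_aemeasurable hX).aestronglyMeasurable 1
    (ae_of_all _ fun ω => abs_ψ_le_one hε (X ω))

lemma integral_ψ_le [IsProbabilityMeasure μ] {ε : ℝ} (hε : ε ^ 2 ≤ 1)
    (hX : AEMeasurable X μ) :
    ∫ ω, ψ ε (X ω) ∂μ ≤ ε ^ 2 + (1 - ε ^ 2) * ∫ ω, Real.tanh (X ω) ∂μ := by
  have htanh := (integrable_tanh_comp hX).const_mul (1 - ε ^ 2)
  calc ∫ ω, ψ ε (X ω) ∂μ
      ≤ ∫ ω, (ε ^ 2 + (1 - ε ^ 2) * Real.tanh (X ω)) ∂μ :=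
        integral_mono (integrable_ψ_comp hε hX) ((integrable_const _).add htanh)
          fun ω => ψ_le hε (X ω)
    _ = ε ^ 2 + (1 - ε ^ 2) * ∫ ω, Real.tanh (X ω) ∂μ := by
        rw [integral_add (integrable_const _) htanh, integral_const, integral_const_mul,
          probReal_univ, one_smul]

end Integral

theorem stmt_19_general (ε : ℝ) (hε : ε ∈ Set.Ioo (-1 : ℝ) 1) (q : ℝ) :
    (∫ z, ψ ε (q + Real.sqrt q * z) ∂(gaussianReal 0 1))
      ≤ ε ^ 2 + (1 - ε ^ 2)
          * ∫ z, Real.tanh (q + Real.sqrt q * z) ∂(gaussianReal 0 1) := by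
  have hε_sq : ε ^ 2 ≤ 1 := by nlinarith [hε.1, hε.2]
  exact integral_ψ_le hε_sq (by fun_prop)

theorem stmt_19 (ε : ℝ) (hε : ε ∈ Set.Ioo (-1 : ℝ) 1) (q : ℝ) (hq : 0 < q) :
    (∫ z, ψ ε (q + Real.sqrt q * z) ∂(gaussianReal 0 1))
      ≤ ε ^ 2 + (1 - ε ^ 2)
          * ∫ z, Real.tanh (q + Real.sqrt q * z) ∂(gaussianReal 0 1) :=
  stmt_19_general ε hε q
end
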